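/- arXiv:2310.14086 — 5 statements merged into one kernel-verified Lean document; each statement's English description precedes it below -/
import Mathlib

section
/- For a POVM M on a d-dimensional Hilbert space and a density matrix ρ, the observational entropy S_M(ρ) equals log d if and only if ρ − 𝟙/d is Hilbert–Schmidt orthogonal to every element M_i of M. -/
open Matrix BigOperators
open scoped Classical ComplexOrder

/-- A (finitely indexed) POVM on `ℂ^d`: positive semidefinite elements summing to the identity. -/
def IsPOVM {d : ℕ} {ι : Type*} [Fintype ι] (M : ι → Matrix (Fin d) (Fin d) ℂ) : Prop :=
  (∀ i, (M i).PosSemidef) ∧ ∑ i, M i = 1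

/-- A density matrix: positive semidefinite with unit trace. -/
def IsDensity {d : ℕ} (ρ : Matrix (Fin d) (Fin d) ℂ) : Prop :=
  ρ.PosSemidef ∧ ρ.trace = 1

/-- Outcome probability `tr(M_i ρ)` (real part). -/
noncomputable def prob {d : ℕ} {ι : Type*} [Fintype ι] (M : ι → Matrix (Fin d) (Fin d) ℂ)
    (ρ : Matrix (Fin d) (Fin d) ℂ) (i : ι) : ℝ := ((M i * ρ).trace).re

/-- Measured relative entropy `D_M(ρ‖σ) = Σ_i p_i log (p_i / q_i)`. -/
noncomputable def Dmeas {d : ℕ} {ι : Type*} [Fintype ι] (M : ι → Matrix (Fin d) (Fin d) ℂ)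
    (ρ σ : Matrix (Fin d) (Fin d) ℂ) : ℝ :=
  ∑ i, prob M ρ i * Real.log (prob M ρ i / prob M σ i)

/-- Observational entropy `S_M(ρ) = -Σ_i p_i log (p_i / V_i)` with `V_i = tr M_i`. -/
noncomputable def Sobs {d : ℕ} {ι : Type*} [Fintype ι] (M : ι → Matrix (Fin d) (Fin d) ℂ)
    (ρ : Matrix (Fin d) (Fin d) ℂ) : ℝ :=
  -∑ i, prob M ρ i * Real.log (prob M ρ i / ((M i).trace).re)

/-- `N` is a stochastic post-processing of `M` (`N ≫ M`). -/
def StochPost {d : ℕ} {ι κ : Type*} [Fintype ι] [Fintype κ]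
    (N : κ → Matrix (Fin d) (Fin d) ℂ) (M : ι → Matrix (Fin d) (Fin d) ℂ) : Prop :=
  ∃ Λ : κ → ι → ℝ, (∀ j i, 0 ≤ Λ j i) ∧ (∀ i, ∑ j, Λ j i = 1) ∧
    ∀ j, N j = ∑ i, Λ j i • M i

/-!
With `p i = tr (M i ρ)` and `q i = tr (M i) / d = tr (M i 𝟙/d)`, the normalisation `∑ p i = 1`
gives `S_M(ρ) = log d - D(p ‖ q)`. Since `𝟙/d` is itself a density matrix, `q` is a probability
distribution, so by the equality case of Gibbs' inequality `D(p ‖ q)` vanishes iff `p = q`; and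
`p i - q i = tr ((ρ - 𝟙/d) M i)`.
-/

namespace Matrix.PosSemidef

open scoped MatrixOrder

/-- Writing `A = Cᴴ C`, the trace `tr (A B) = tr (C B Cᴴ)` is that of a positive semidefinite
matrix. -/
theorem trace_mul_nonneg {n 𝕜 : Type*} [Fintype n] [RCLike 𝕜] {A B : Matrix n n 𝕜}
    (hA : A.PosSemidef) (hB : B.PosSemidef) : 0 ≤ (A * B).trace := by
  obtain ⟨C, rfl⟩ := CStarAlgebra.nonneg_iff_eq_star_mul_self.mp hA.nonneg
  rw [star_eq_conjTranspose, mul_assoc, trace_mul_comm]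
  exact (hB.mul_mul_conjTranspose_same C).trace_nonneg

end Matrix.PosSemidef

section Gibbs

open Real InformationTheory

lemma mul_log_div_add_sub_eq_mul_klFun {p q : ℝ} (hq : q ≠ 0) :
    p * log (p / q) + q - p = q * klFun (p / q) := by
  rw [klFun_apply]
  field_simp

lemma mul_log_div_add_sub_nonneg {p q : ℝ} (hp : 0 ≤ p) (hq : 0 ≤ q) (hpq : q = 0 → p = 0) :
    0 ≤ p * log (p / q) + q - p := by
  rcases hq.eq_or_lt with rfl | hq
  · simp [hpq rfl]
  · rw [mul_log_div_add_sub_eq_mul_klFun hq.ne']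
    exact mul_nonneg hq.le (klFun_nonneg (div_nonneg hp hq.le))

lemma mul_log_div_add_sub_eq_zero_iff {p q : ℝ} (hp : 0 ≤ p) (hq : 0 ≤ q)
    (hpq : q = 0 → p = 0) : p * log (p / q) + q - p = 0 ↔ p = q := by
  rcases hq.eq_or_lt with rfl | hq
  · simp [hpq rfl]
  · rw [mul_log_div_add_sub_eq_mul_klFun hq.ne', mul_eq_zero, or_iff_right hq.ne',
      klFun_eq_zero_iff (div_nonneg hp hq.le), div_eq_one_iff_eq hq.ne']

/-- Because the masses agree, the sum equals `∑ i, (p i * log (p i / q i) + q i - p i)`, whose terms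
are nonnegative. -/
theorem sum_mul_log_div_eq_zero_iff {ι : Type*} [Fintype ι] {p q : ι → ℝ} (hp : ∀ i, 0 ≤ p i)
    (hq : ∀ i, 0 ≤ q i) (hpq : ∀ i, q i = 0 → p i = 0) (hsum : ∑ i, p i = ∑ i, q i) :
    ∑ i, p i * log (p i / q i) = 0 ↔ p = q := by
  have hterms : ∑ i, p i * log (p i / q i) = ∑ i, (p i * log (p i / q i) + q i - p i) := by
    rw [Finset.sum_sub_distrib, Finset.sum_add_distrib, hsum, add_sub_cancel_right]
  rw [hterms, funext_iff, Finset.sum_eq_zero_iff_of_nonneg fun i _ =>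
    mul_log_div_add_sub_nonneg (hp i) (hq i) (hpq i)]
  simp only [Finset.mem_univ, true_imp_iff, mul_log_div_add_sub_eq_zero_iff (hp _) (hq _) (hpq _)]

lemma mul_log_div_div {p q c : ℝ} (hc : c ≠ 0) (hpq : p ≠ 0 → q ≠ 0) :
    p * log (p / (q / c)) = p * log (p / q) + p * log c := by
  rcases eq_or_ne p 0 with rfl | hp
  · simp
  rw [div_div_eq_mul_div, mul_div_right_comm, log_mul (div_ne_zero hp (hpq hp)) hc, mul_add]

end Gibbs

section Measurement

variable {d : ℕ} {ι : Type*} [Fintype ι] {M : ι → Matrix (Fin d) (Fin d) ℂ}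
  {ρ σ : Matrix (Fin d) (Fin d) ℂ}

lemma ofReal_prob {i : ι} (hM : (M i).PosSemidef) (hρ : ρ.PosSemidef) :
    (prob M ρ i : ℂ) = (M i * ρ).trace :=
  Complex.ext rfl (Complex.nonneg_iff.mp (hM.trace_mul_nonneg hρ : (0 : ℂ) ≤ _)).2

lemma prob_nonneg {i : ι} (hM : (M i).PosSemidef) (hρ : ρ.PosSemidef) : 0 ≤ prob M ρ i :=
  (Complex.nonneg_iff.mp (hM.trace_mul_nonneg hρ : (0 : ℂ) ≤ _)).1

lemma prob_eq_zero_of_trace_re_eq_zero {i : ι} (hM : (M i).PosSemidef) (h : (M i).trace.re = 0) :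
    prob M ρ i = 0 := by
  have htrace : (M i).trace = 0 :=
    Complex.ext h (Complex.nonneg_iff.mp hM.trace_nonneg).2.symm
  simp [prob, hM.trace_eq_zero_iff.mp htrace]

lemma sum_prob_eq_one (hM : ∑ i, M i = 1) (hρ : ρ.trace = 1) : ∑ i, prob M ρ i = 1 := by
  simp only [prob, ← Complex.re_sum, ← trace_sum, ← Finset.sum_mul, hM, one_mul, hρ,
    Complex.one_re]

lemma prob_maximallyMixed (i : ι) :
    prob M ((d : ℂ)⁻¹ • 1) i = (M i).trace.re / d := by
  rw [prob, Matrix.mul_smul, mul_one, trace_smul, smul_eq_mul, ← Complex.ofReal_natCast,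
    ← Complex.ofReal_inv, Complex.re_ofReal_mul, inv_mul_eq_div]

lemma isDensity_maximallyMixed (hd : 0 < d) :
    IsDensity ((d : ℂ)⁻¹ • (1 : Matrix (Fin d) (Fin d) ℂ)) := by
  refine ⟨PosSemidef.one.smul (by positivity), ?_⟩
  rw [trace_smul, trace_one, Fintype.card_fin, smul_eq_mul,
    inv_mul_cancel₀ (by exact_mod_cast hd.ne')]

lemma trace_sub_mul_eq_zero_iff {i : ι} (hM : (M i).PosSemidef) (hρ : ρ.PosSemidef)
    (hσ : σ.PosSemidef) : ((ρ - σ) * M i).trace = 0 ↔ prob M ρ i = prob M σ i := by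
  rw [sub_mul, trace_sub, trace_mul_comm ρ, trace_mul_comm σ, ← ofReal_prob hM hρ,
    ← ofReal_prob hM hσ, sub_eq_zero, Complex.ofReal_inj]

lemma Sobs_eq_log_sub_Dmeas_maximallyMixed (hd : 0 < d) (hM : IsPOVM M) (hρ : ρ.trace = 1) :
    Sobs M ρ = Real.log d - Dmeas M ρ ((d : ℂ)⁻¹ • 1) := by
  have hterm (i : ι) : prob M ρ i * Real.log (prob M ρ i / prob M ((d : ℂ)⁻¹ • 1) i) =
      prob M ρ i * Real.log (prob M ρ i / (M i).trace.re) + prob M ρ i * Real.log d := by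
    rw [prob_maximallyMixed]
    exact mul_log_div_div (by exact_mod_cast hd.ne') fun hp hV =>
      hp (prob_eq_zero_of_trace_re_eq_zero (hM.1 i) hV)
  rw [Sobs, Dmeas, Finset.sum_congr rfl fun i _ => hterm i, Finset.sum_add_distrib,
    ← Finset.sum_mul, sum_prob_eq_one hM.2 hρ, one_mul]
  ring

end Measurement

theorem stmt3 {d m : ℕ} (hd : 0 < d) (M : Fin m → Matrix (Fin d) (Fin d) ℂ) (hM : IsPOVM M)
    (ρ : Matrix (Fin d) (Fin d) ℂ) (hρ : IsDensity ρ) :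
    Sobs M ρ = Real.log d ↔
      ∀ i, ((ρ - ((d : ℂ))⁻¹ • (1 : Matrix (Fin d) (Fin d) ℂ)) * M i).trace = 0 := by
  have hσ := isDensity_maximallyMixed hd
  have habs (i : Fin m) : prob M ((d : ℂ)⁻¹ • 1) i = 0 → prob M ρ i = 0 := by
    rw [prob_maximallyMixed, div_eq_zero_iff, or_iff_left (by exact_mod_cast hd.ne')]
    exact prob_eq_zero_of_trace_re_eq_zero (hM.1 i)
  rw [Sobs_eq_log_sub_Dmeas_maximallyMixed hd hM hρ.2, sub_eq_self, Dmeas,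
    sum_mul_log_div_eq_zero_iff (fun i => prob_nonneg (hM.1 i) hρ.1)
      (fun i => prob_nonneg (hM.1 i) hσ.1) habs
      (by rw [sum_prob_eq_one hM.2 hρ.2, sum_prob_eq_one hM.2 hσ.2]), funext_iff]
  exact forall_congr' fun i => (trace_sub_mul_eq_zero_iff (hM.1 i) hρ.1 hσ.1).symm
end

section
/- Suppose POVMs M, N on a d-dimensional Hilbert space satisfy: for every density matrix ρ, S_M(ρ) = log d implies S_N(ρ) = log d. Then every element of N lies in the real span of the elements of M. -/
open Matrix BigOperators
open scoped Classical ComplexOrder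

/-!
If `N j` is not in the real span of `M`, a real functional separates it from that span; it is
represented as `A ↦ re tr(A x)` by a Hermitian `x`, which is trace-orthogonal to every `M i`
and hence to `𝟙 = ∑ M i`. The state `σ = (𝟙 + t x)/d` (positive for small `t > 0`) has the
same `M`-statistics as the maximally mixed state, so `S_M(σ) = log d`. Since
`S_K(ρ) = log d - D_K(ρ ‖ 𝟙/d)` for any POVM `K`, the hypothesis gives `D_N(σ ‖ 𝟙/d) = 0`, and
Gibbs' equality case forces `tr(N_j σ) = tr(N_j)/d`, i.e. `re tr(N_j x) = 0`, a contradiction.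
-/

namespace Matrix
variable {n : Type*} [Fintype n]

theorem PosSemidef.trace_mul_nonneg_s6 {A B : Matrix n n ℂ} (hA : A.PosSemidef)
    (hB : B.PosSemidef) : 0 ≤ (A * B).trace := by
  open scoped MatrixOrder in
  obtain ⟨C, rfl⟩ := CStarAlgebra.nonneg_iff_eq_star_mul_self.mp hA.nonneg
  rw [star_eq_conjTranspose, mul_assoc, trace_mul_comm]
  exact (hB.mul_mul_conjTranspose_same C).trace_nonneg

theorem PosSemidef.eq_zero_of_re_trace_eq_zero {A : Matrix n n ℂ} (hA : A.PosSemidef)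
    (h : A.trace.re = 0) : A = 0 :=
  hA.trace_eq_zero_iff.mp (Complex.ext h (Complex.nonneg_iff.mp hA.trace_nonneg).2.symm)

theorem IsHermitian.im_trace_eq_zero {A : Matrix n n ℂ} (hA : A.IsHermitian) :
    A.trace.im = 0 :=
  Complex.conj_eq_iff_im.mp ((trace_conjTranspose A).symm.trans (congrArg trace hA.eq))

theorem IsHermitian.exists_pos_posSemidef_one_add_smul [DecidableEq n] {x : Matrix n n ℂ}
    (hx : x.IsHermitian) : ∃ t : ℝ, 0 < t ∧ (1 + t • x).PosSemidef := by
  open scoped MatrixOrder Matrix.Norms.L2Operator in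
  set t := (‖x‖ + 1)⁻¹
  have ht : 0 < t := by positivity
  refine ⟨t, ht, ?_⟩
  have htx : t * ‖x‖ ≤ 1 := by
    rw [inv_mul_le_iff₀ (by positivity)]; linarith
  have hlow : t • -(algebraMap ℝ _ ‖x‖) ≤ t • x :=
    smul_le_smul_of_nonneg_left (IsSelfAdjoint.neg_algebraMap_norm_le_self hx) ht.le
  rw [Algebra.algebraMap_eq_smul_one, smul_neg, smul_smul] at hlow
  rw [← nonneg_iff_posSemidef]
  calc (0 : Matrix n n ℂ) ≤ (1 - t * ‖x‖) • 1 := smul_nonneg (by linarith) zero_le_one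
    _ = 1 + -((t * ‖x‖) • 1) := by rw [sub_smul, one_smul, sub_eq_add_neg]
    _ ≤ 1 + t • x := add_le_add_right hlow 1

noncomputable def traceForm : Matrix n n ℂ →ₗ[ℝ] Module.Dual ℝ (Matrix n n ℂ) :=
  LinearMap.mk₂ ℝ (fun y A => ((A * y).trace).re)
    (fun _ _ _ => by simp [mul_add]) (fun _ _ _ => by simp)
    (fun _ _ _ => by simp [add_mul]) (fun _ _ _ => by simp)

theorem traceForm_apply (y A : Matrix n n ℂ) : traceForm y A = ((A * y).trace).re := rfl

theorem traceForm_surjective : Function.Surjective (traceForm : Matrix n n ℂ →ₗ[ℝ] _) := by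
  refine (LinearMap.injective_iff_surjective_of_finrank_eq_finrank
    Subspace.dual_finrank_eq.symm).mp ?_
  refine (injective_iff_map_eq_zero _).mpr fun y hy => ?_
  have hre : ((yᴴ * y).trace).re = 0 := LinearMap.congr_fun hy yᴴ
  have hnn := (posSemidef_conjTranspose_mul_self y).trace_nonneg
  exact trace_conjTranspose_mul_self_eq_zero_iff.mp
    (Complex.ext hre ((Complex.nonneg_iff.mp hnn).2.symm))

theorem IsHermitian.re_trace_mul_conjTranspose {A : Matrix n n ℂ} (hA : A.IsHermitian)
    (y : Matrix n n ℂ) :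
    ((A * yᴴ).trace).re = ((A * y).trace).re := by
  rw [← hA.eq, ← conjTranspose_mul, trace_conjTranspose, hA.eq, trace_mul_comm]
  exact Complex.conj_re _

theorem exists_isHermitian_re_trace_mul_eq (f : Module.Dual ℝ (Matrix n n ℂ)) :
    ∃ x : Matrix n n ℂ, x.IsHermitian ∧ ∀ A : Matrix n n ℂ, A.IsHermitian →
      ((A * x).trace).re = f A := by
  obtain ⟨y, rfl⟩ := traceForm_surjective f
  refine ⟨(2⁻¹ : ℝ) • (y + yᴴ), ?_, fun A hA => ?_⟩
  · simp [IsHermitian, conjTranspose_smul, add_comm]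
  · rw [Matrix.mul_smul, trace_smul, Complex.smul_re, mul_add, trace_add, Complex.add_re,
      hA.re_trace_mul_conjTranspose, traceForm_apply]
    ring

theorem exists_isHermitian_orthogonal_of_notMem_span {S : Set (Matrix n n ℂ)} {A : Matrix n n ℂ}
    (hS : ∀ B ∈ S, B.IsHermitian) (hA : A.IsHermitian) (hAS : A ∉ Submodule.span ℝ S) :
    ∃ x : Matrix n n ℂ, x.IsHermitian ∧ (∀ B ∈ S, ((B * x).trace).re = 0) ∧
      ((A * x).trace).re ≠ 0 := by
  obtain ⟨f, hfA, hfS⟩ := Submodule.exists_dual_map_eq_bot_of_notMem hAS inferInstance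
  obtain ⟨x, hx, hxf⟩ := exists_isHermitian_re_trace_mul_eq f
  refine ⟨x, hx, fun B hB => ?_, hxf A hA ▸ hfA⟩
  rw [hxf B (hS B hB), ← Submodule.mem_bot ℝ, ← hfS]
  exact Submodule.mem_map_of_mem (Submodule.subset_span hB)

end Matrix

namespace Real
open InformationTheory

theorem mul_log_div_eq_mul_klFun_add {p q : ℝ} (hpq : q = 0 → p = 0) :
    p * log (p / q) = q * klFun (p / q) + (p - q) := by
  rcases eq_or_ne q 0 with rfl | hq
  · simp [hpq rfl]
  · rw [klFun]
    field_simp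
    ring

theorem eq_of_sum_mul_log_div_eq_zero {ι : Type*} [Fintype ι] {p q : ι → ℝ}
    (hp : ∀ i, 0 ≤ p i) (hq : ∀ i, 0 ≤ q i) (hpq : ∀ i, q i = 0 → p i = 0)
    (hsum : ∑ i, p i = ∑ i, q i) (h : ∑ i, p i * log (p i / q i) = 0) : p = q := by
  have hkl : ∀ i, 0 ≤ q i * klFun (p i / q i) := fun i =>
    mul_nonneg (hq i) (klFun_nonneg (div_nonneg (hp i) (hq i)))
  simp_rw [mul_log_div_eq_mul_klFun_add (hpq _), Finset.sum_add_distrib, Finset.sum_sub_distrib,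
    hsum, sub_self, add_zero, Finset.sum_eq_zero_iff_of_nonneg fun i _ => hkl i] at h
  funext i
  rcases (mul_eq_zero.mp (h i (Finset.mem_univ i))) with hqi | hkli
  · rw [hqi, hpq i hqi]
  · rw [klFun_eq_zero_iff (div_nonneg (hp i) (hq i))] at hkli
    exact (div_eq_one_iff_eq (fun h0 => by simp [h0] at hkli)).mp hkli

end Real

section Measurement
variable {d : ℕ} {ι : Type*} [Fintype ι] {M : ι → Matrix (Fin d) (Fin d) ℂ}

theorem prob_add (M : ι → Matrix (Fin d) (Fin d) ℂ) (ρ τ : Matrix (Fin d) (Fin d) ℂ) (i : ι) :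
    prob M (ρ + τ) i = prob M ρ i + prob M τ i := by
  simp [prob, mul_add]

theorem prob_smul (M : ι → Matrix (Fin d) (Fin d) ℂ) (c : ℝ) (ρ : Matrix (Fin d) (Fin d) ℂ)
    (i : ι) : prob M (c • ρ) i = c * prob M ρ i := by
  simp [prob]

theorem prob_add_smul (M : ι → Matrix (Fin d) (Fin d) ℂ) (ρ x : Matrix (Fin d) (Fin d) ℂ) (c : ℝ)
    (i : ι) : prob M (ρ + c • x) i = prob M ρ i + c * ((M i * x).trace).re := by
  rw [prob_add, prob_smul]
  rfl

theorem dmeas_eq_zero_of_prob_eq {ρ σ : Matrix (Fin d) (Fin d) ℂ} (h : prob M ρ = prob M σ) :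
    Dmeas M ρ σ = 0 := by
  refine Finset.sum_eq_zero fun i _ => ?_
  rcases eq_or_ne (prob M σ i) 0 with h0 | h0 <;> simp [h, h0]

namespace IsPOVM

theorem sum_prob (hM : IsPOVM M) (ρ : Matrix (Fin d) (Fin d) ℂ) :
    ∑ i, prob M ρ i = ρ.trace.re := by
  simp only [prob, ← Complex.re_sum, ← trace_sum, ← Finset.sum_mul, hM.2, one_mul]

theorem prob_nonneg (hM : IsPOVM M) {ρ : Matrix (Fin d) (Fin d) ℂ} (hρ : ρ.PosSemidef) (i : ι) :
    0 ≤ prob M ρ i :=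
  (Complex.nonneg_iff.mp ((hM.1 i).trace_mul_nonneg_s6 hρ)).1

theorem prob_eq_zero_of_re_trace_eq_zero (hM : IsPOVM M) {i : ι} (h : (M i).trace.re = 0)
    (ρ : Matrix (Fin d) (Fin d) ℂ) : prob M ρ i = 0 := by
  simp [prob, (hM.1 i).eq_zero_of_re_trace_eq_zero h]

theorem trace_eq_zero_of_re_trace_mul_eq_zero (hM : IsPOVM M) {x : Matrix (Fin d) (Fin d) ℂ}
    (hx : x.IsHermitian) (hxM : ∀ i, ((M i * x).trace).re = 0) : x.trace = 0 :=
  Complex.ext (by rw [Complex.zero_re, ← hM.sum_prob]; exact Finset.sum_eq_zero fun i _ => hxM i)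
    hx.im_trace_eq_zero

end IsPOVM

noncomputable def maxMixed (d : ℕ) : Matrix (Fin d) (Fin d) ℂ := (d : ℝ)⁻¹ • 1

theorem posSemidef_maxMixed : (maxMixed d).PosSemidef :=
  PosSemidef.one.smul (inv_nonneg.mpr d.cast_nonneg)

theorem trace_maxMixed (hd : 0 < d) : (maxMixed d).trace = 1 := by
  simp [maxMixed, hd.ne']

theorem prob_maxMixed (M : ι → Matrix (Fin d) (Fin d) ℂ) (i : ι) :
    prob M (maxMixed d) i = (M i).trace.re / d := by
  rw [maxMixed, prob_smul, prob, mul_one, div_eq_inv_mul]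

theorem isDensity_maxMixed_add_smul (hd : 0 < d) {x : Matrix (Fin d) (Fin d) ℂ}
    (hx : x.trace = 0) {t : ℝ} (ht : (1 + t • x).PosSemidef) :
    IsDensity (maxMixed d + (t / d) • x) := by
  have hσ : maxMixed d + (t / d) • x = (d : ℝ)⁻¹ • (1 + t • x) := by
    rw [maxMixed, smul_add, smul_smul, inv_mul_eq_div]
  refine ⟨hσ ▸ ht.smul (inv_nonneg.mpr d.cast_nonneg), ?_⟩
  rw [trace_add, trace_smul, hx, smul_zero, add_zero, trace_maxMixed hd]

namespace IsPOVM

theorem sobs_eq_log_sub_dmeas (hM : IsPOVM M) (hd : 0 < d) {ρ : Matrix (Fin d) (Fin d) ℂ}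
    (hρ : ρ.trace = 1) : Sobs M ρ = Real.log d - Dmeas M ρ (maxMixed d) := by
  have hterm : ∀ i, prob M ρ i * Real.log (prob M ρ i / ((M i).trace.re / d))
      = prob M ρ i * Real.log (prob M ρ i / (M i).trace.re) + prob M ρ i * Real.log d := by
    intro i
    rcases eq_or_ne (prob M ρ i) 0 with hp | hp
    · simp [hp]
    have hV : (M i).trace.re ≠ 0 := fun hV => hp (hM.prob_eq_zero_of_re_trace_eq_zero hV ρ)
    rw [div_div_eq_mul_div, mul_div_right_comm, Real.log_mul (div_ne_zero hp hV)
      (Nat.cast_ne_zero.mpr hd.ne'), mul_add]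
  simp only [Sobs, Dmeas, prob_maxMixed, hterm, Finset.sum_add_distrib, ← Finset.sum_mul,
    hM.sum_prob, hρ, Complex.one_re, one_mul]
  ring

theorem sobs_eq_log_iff (hM : IsPOVM M) (hd : 0 < d) {ρ : Matrix (Fin d) (Fin d) ℂ}
    (hρ : IsDensity ρ) : Sobs M ρ = Real.log d ↔ prob M ρ = prob M (maxMixed d) := by
  rw [hM.sobs_eq_log_sub_dmeas hd hρ.2, sub_eq_self]
  refine ⟨fun h => Real.eq_of_sum_mul_log_div_eq_zero (hM.prob_nonneg hρ.1)
    (hM.prob_nonneg posSemidef_maxMixed) (fun i hi => ?_) ?_ h, dmeas_eq_zero_of_prob_eq⟩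
  · rw [prob_maxMixed, div_eq_zero_iff, or_iff_left (Nat.cast_ne_zero.mpr hd.ne')] at hi
    exact hM.prob_eq_zero_of_re_trace_eq_zero hi ρ
  · rw [hM.sum_prob, hM.sum_prob, hρ.2, trace_maxMixed hd]

end IsPOVM

end Measurement

theorem stmt6 {d m n : ℕ} (hd : 0 < d) (M : Fin m → Matrix (Fin d) (Fin d) ℂ)
    (N : Fin n → Matrix (Fin d) (Fin d) ℂ) (hM : IsPOVM M) (hN : IsPOVM N)
    (h : ∀ ρ : Matrix (Fin d) (Fin d) ℂ, IsDensity ρ →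
      Sobs M ρ = Real.log d → Sobs N ρ = Real.log d) :
    ∀ j, N j ∈ Submodule.span ℝ (Set.range M) := by
  intro j
  by_contra hj
  obtain ⟨x, hx, hxM, hxN⟩ := exists_isHermitian_orthogonal_of_notMem_span
    (by rintro _ ⟨i, rfl⟩; exact (hM.1 i).1) (hN.1 j).1 hj
  replace hxM : ∀ i, ((M i * x).trace).re = 0 := fun i => hxM _ ⟨i, rfl⟩
  obtain ⟨t, ht, hpsd⟩ := hx.exists_pos_posSemidef_one_add_smul
  have hσ := isDensity_maxMixed_add_smul hd (hM.trace_eq_zero_of_re_trace_mul_eq_zero hx hxM) hpsd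
  have hSM : Sobs M (maxMixed d + (t / d) • x) = Real.log d :=
    (hM.sobs_eq_log_iff hd hσ).2 (funext fun i => by rw [prob_add_smul, hxM, mul_zero, add_zero])
  have hNj := congrFun ((hN.sobs_eq_log_iff hd hσ).1 (h _ hσ hSM)) j
  rw [prob_add_smul, add_eq_left] at hNj
  exact hxN ((mul_eq_zero.mp hNj).resolve_left (by positivity))
end

section
/- Let M be a POVM whose elements are linearly independent, N any POVM, λ ∈ [0,1), and N' the POVM with elements ((1−λ)N_j)_j together with the single element λ𝟙. Then N' is a stochastic post-processing of M if and only if N is a stochastic post-processing of M. -/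
open Matrix BigOperators
open scoped Classical ComplexOrder

/-!
Since `∑ i, M i = 1`, the element `l • 1` is the combination of the `M i` with all
coefficients equal to `l`; linear independence makes this the only such combination. Hence in any
post-processing `Λ'` realising `N'` the row of `l • 1` is constantly `l`, so every column of
the remaining rows sums to `1 - l`, and dividing them by `1 - l ≠ 0` realises `N`. Conversely,
scaling a post-processing of `N` by `1 - l` and appending the constant row `l` realises `N'`.
-/

section PostProcessing

variable {d : ℕ} {ι κ α : Type*} [Fintype ι] [Fintype κ] [Fintype α]

theorem LinearIndependent.eq_of_sum_smul_eq_smul_one {M : ι → Matrix (Fin d) (Fin d) ℂ}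
    (hind : LinearIndependent ℝ M) (hsum : ∑ i, M i = 1) {a : ι → ℝ} {c : ℝ}
    (h : ∑ i, a i • M i = c • (1 : Matrix (Fin d) (Fin d) ℂ)) (i : ι) : a i = c := by
  have hzero : ∑ i, (a i - c) • M i = 0 := by
    simp only [sub_smul, Finset.sum_sub_distrib, ← Finset.smul_sum, hsum, h, sub_self]
  exact sub_eq_zero.mp (Fintype.linearIndependent_iff.mp hind _ hzero i)

theorem StochPost.sumElim_smul_one [Unique α] {N : κ → Matrix (Fin d) (Fin d) ℂ}
    {M : ι → Matrix (Fin d) (Fin d) ℂ} (hNM : StochPost N M) (hsum : ∑ i, M i = 1) {l : ℝ}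
    (hl0 : 0 ≤ l) (hl1 : l ≤ 1) :
    StochPost (Sum.elim (fun j => (1 - l) • N j) (fun _ : α => l • 1)) M := by
  obtain ⟨Λ, hpos, hcol, heq⟩ := hNM
  refine ⟨Sum.elim (fun j i => (1 - l) * Λ j i) (fun _ _ => l), ?_, ?_, ?_⟩
  · rintro (j | a) i
    · exact mul_nonneg (sub_nonneg.mpr hl1) (hpos j i)
    · exact hl0
  · intro i
    simp [Fintype.sum_sum_type, ← Finset.mul_sum, hcol i]
  · rintro (j | a)
    · simp only [Sum.elim_inl, heq j, Finset.smul_sum, smul_smul]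
    · simp only [Sum.elim_inr, ← hsum, Finset.smul_sum]

theorem StochPost.of_sumElim_smul_one [Unique α] {N : κ → Matrix (Fin d) (Fin d) ℂ}
    {M : ι → Matrix (Fin d) (Fin d) ℂ} (hind : LinearIndependent ℝ M) (hsum : ∑ i, M i = 1)
    {l : ℝ} (hl1 : l < 1)
    (h : StochPost (Sum.elim (fun j => (1 - l) • N j) (fun _ : α => l • 1)) M) :
    StochPost N M := by
  obtain ⟨Λ, hpos, hcol, heq⟩ := h
  have hl : 0 < 1 - l := sub_pos.mpr hl1
  have hrow (i : ι) : Λ (Sum.inr default) i = l :=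
    hind.eq_of_sum_smul_eq_smul_one hsum (heq (Sum.inr default)).symm i
  refine ⟨fun j i => Λ (Sum.inl j) i / (1 - l), fun j i => div_nonneg (hpos _ i) hl.le, ?_, ?_⟩
  · intro i
    have hc := hcol i
    rw [Fintype.sum_sum_type, Fintype.sum_unique (fun a : α => Λ (Sum.inr a) i), hrow i] at hc
    rw [← Finset.sum_div, div_eq_one_iff_eq hl.ne']
    linarith
  · intro j
    rw [← inv_smul_smul₀ hl.ne' (N j),
      ← Sum.elim_inl (fun j => (1 - l) • N j) (fun _ : α => l • 1) j, heq, Finset.smul_sum]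
    simp only [smul_smul, div_eq_inv_mul]

end PostProcessing

theorem stmt12_general {d m n : ℕ} (M : Fin m → Matrix (Fin d) (Fin d) ℂ)
    (N : Fin n → Matrix (Fin d) (Fin d) ℂ) (hM : IsPOVM M)
    (hind : LinearIndependent ℝ M) (l : ℝ) (hl : l ∈ Set.Ico (0 : ℝ) 1) :
    StochPost (Sum.elim (fun j => (1 - l) • N j)
        (fun _ : Fin 1 => l • (1 : Matrix (Fin d) (Fin d) ℂ)) :
        Fin n ⊕ Fin 1 → Matrix (Fin d) (Fin d) ℂ) M
      ↔ StochPost N M :=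
  ⟨StochPost.of_sumElim_smul_one hind hM.2 hl.2,
    fun h => h.sumElim_smul_one hM.2 hl.1 hl.2.le⟩

theorem stmt12 {d m n : ℕ} (M : Fin m → Matrix (Fin d) (Fin d) ℂ)
    (N : Fin n → Matrix (Fin d) (Fin d) ℂ) (hM : IsPOVM M) (hN : IsPOVM N)
    (hind : LinearIndependent ℝ M) (l : ℝ) (hl : l ∈ Set.Ico (0 : ℝ) 1) :
    StochPost (Sum.elim (fun j => (1 - l) • N j)
        (fun _ : Fin 1 => l • (1 : Matrix (Fin d) (Fin d) ℂ)) :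
        Fin n ⊕ Fin 1 → Matrix (Fin d) (Fin d) ℂ) M
      ↔ StochPost N M :=
  stmt12_general M N hM hind l hl
end

section
/- Let N be a POVM with linearly independent elements and Λ an invertible square stochastic matrix, with M_i = Σ_j Λ_{i|j} N_j. Then: M has linearly independent elements; and N is a stochastic post-processing of M if and only if the inverse matrix Λ^{-1} is stochastic. -/
open Matrix BigOperators
open scoped Classical ComplexOrder

lemma key_sum {d m : ℕ} (N : Fin m → Matrix (Fin d) (Fin d) ℂ)
    (Λ : Matrix (Fin m) (Fin m) ℝ) (M : Fin m → Matrix (Fin d) (Fin d) ℂ)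
    (hrel : ∀ i, M i = ∑ j, Λ i j • N j) (c : Fin m → ℝ) :
    ∑ i, c i • M i = ∑ j, (∑ i, c i * Λ i j) • N j := by
  simp only [hrel, Finset.smul_sum, smul_smul]
  rw [Finset.sum_comm]
  simp [Finset.sum_smul]

theorem stmt13' {d m : ℕ} (N : Fin m → Matrix (Fin d) (Fin d) ℂ) (hN : IsPOVM N)
    (hind : LinearIndependent ℝ N) (Λ : Matrix (Fin m) (Fin m) ℝ)
    (hpos : ∀ i j, 0 ≤ Λ i j) (hcol : ∀ j, ∑ i, Λ i j = 1) (hinv : IsUnit Λ)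
    (M : Fin m → Matrix (Fin d) (Fin d) ℂ) (hrel : ∀ i, M i = ∑ j, Λ i j • N j) :
    LinearIndependent ℝ M ∧
      (StochPost N M ↔ ((∀ j i, 0 ≤ Λ⁻¹ j i) ∧ ∀ i, ∑ j, Λ⁻¹ j i = 1)) := by
  have hNind := Fintype.linearIndependent_iff.mp hind
  have hdet : IsUnit Λ.det := (Matrix.isUnit_iff_isUnit_det Λ).mp hinv
  constructor
  · rw [Fintype.linearIndependent_iff]
    intro c hc i
    have h1 : ∀ j, ∑ i, c i * Λ i j = 0 := by
      intro j
      exact hNind _ (by rw [← key_sum N Λ M hrel c, hc]) j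
    have hvm : c ᵥ* Λ = 0 := funext h1
    have : c = (c ᵥ* Λ) ᵥ* Λ⁻¹ := by
      rw [Matrix.vecMul_vecMul, Matrix.mul_nonsing_inv _ hdet, Matrix.vecMul_one]
    rw [hvm, Matrix.zero_vecMul] at this
    exact congrFun this i
  · constructor
    · rintro ⟨Γ, hΓpos, hΓcol, hΓrel⟩
      have hGL : Matrix.of Γ * Λ = 1 := by
        ext j k
        have h1 : N j = ∑ k, (∑ i, Γ j i * Λ i k) • N k := by
          rw [← key_sum N Λ M hrel (Γ j)]; exact hΓrel j
        have h2 : ∑ k, ((∑ i, Γ j i * Λ i k) - (if j = k then (1:ℝ) else 0)) • N k = 0 := by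
          simp only [sub_smul, Finset.sum_sub_distrib, ← h1, ite_smul, one_smul, zero_smul]
          simp
        have := hNind _ h2 k
        have hval : ∑ i, Γ j i * Λ i k = if j = k then 1 else 0 := by linarith [sub_eq_zero.mp this]
        simpa [Matrix.mul_apply, Matrix.one_apply] using hval
      have hΓeq : Λ⁻¹ = Matrix.of Γ := Matrix.inv_eq_left_inv hGL
      refine ⟨fun j i => by rw [hΓeq]; exact hΓpos j i, fun i => by
        rw [show ∑ j, Λ⁻¹ j i = ∑ j, Γ j i from Finset.sum_congr rfl (fun j _ => by rw [hΓeq]; rfl)]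
        exact hΓcol i⟩
    · rintro ⟨hipos, hicol⟩
      refine ⟨fun j i => Λ⁻¹ j i, hipos, hicol, fun j => ?_⟩
      rw [key_sum N Λ M hrel (Λ⁻¹ j)]
      have : ∀ k, ∑ i, Λ⁻¹ j i * Λ i k = (1 : Matrix (Fin m) (Fin m) ℝ) j k := by
        intro k
        rw [← Matrix.nonsing_inv_mul _ hdet, Matrix.mul_apply]
      simp only [this, Matrix.one_apply]
      simp [Finset.sum_ite_eq, eq_comm]


theorem stmt13 {d m : ℕ} (N : Fin m → Matrix (Fin d) (Fin d) ℂ) (hN : IsPOVM N)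
    (hind : LinearIndependent ℝ N) (Λ : Matrix (Fin m) (Fin m) ℝ)
    (hpos : ∀ i j, 0 ≤ Λ i j) (hcol : ∀ j, ∑ i, Λ i j = 1) (hinv : IsUnit Λ)
    (M : Fin m → Matrix (Fin d) (Fin d) ℂ) (hrel : ∀ i, M i = ∑ j, Λ i j • N j) :
    LinearIndependent ℝ M ∧
      (StochPost N M ↔ ((∀ j i, 0 ≤ Λ⁻¹ j i) ∧ ∀ i, ∑ j, Λ⁻¹ j i = 1)) :=
  stmt13' N hN hind Λ hpos hcol hinv M hrel
end

section
/- On a qubit, let P = (|0⟩⟨0|, |1⟩⟨1|) and M = (½|0⟩⟨0| + ¼𝟙, ½|1⟩⟨1| + ¼𝟙). Then every element of P is a real linear combination of elements of M, but P is not a stochastic post-processing of M. -/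
open Matrix BigOperators
open scoped Classical ComplexOrder

theorem stmt14 :
    let P : Fin 2 → Matrix (Fin 2) (Fin 2) ℂ := ![!![1, 0; 0, 0], !![0, 0; 0, 1]]
    let M : Fin 2 → Matrix (Fin 2) (Fin 2) ℂ :=
      ![!![3/4, 0; 0, 1/4], !![1/4, 0; 0, 3/4]]
    (∀ x, P x ∈ Submodule.span ℝ (Set.range M)) ∧ ¬ StochPost P M := by
  intro P M
  have hM0 : M 0 ∈ Submodule.span ℝ (Set.range M) := Submodule.subset_span ⟨0, rfl⟩
  have hM1 : M 1 ∈ Submodule.span ℝ (Set.range M) := Submodule.subset_span ⟨1, rfl⟩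
  constructor
  · intro x
    fin_cases x
    · have : P 0 = (3/2 : ℝ) • M 0 + (-(1/2) : ℝ) • M 1 := by
        simp only [P, M]
        ext i j
        fin_cases i <;> fin_cases j <;>
          simp [Matrix.add_apply, Matrix.smul_apply] <;> norm_num
      rw [show (⟨0, by norm_num⟩ : Fin 2) = 0 from rfl, this]
      exact Submodule.add_mem _ (Submodule.smul_mem _ _ hM0) (Submodule.smul_mem _ _ hM1)
    · have : P 1 = (-(1/2) : ℝ) • M 0 + (3/2 : ℝ) • M 1 := by
        simp only [P, M]
        ext i j
        fin_cases i <;> fin_cases j <;>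
          simp [Matrix.add_apply, Matrix.smul_apply] <;> norm_num
      rw [show (⟨1, by norm_num⟩ : Fin 2) = 1 from rfl, this]
      exact Submodule.add_mem _ (Submodule.smul_mem _ _ hM0) (Submodule.smul_mem _ _ hM1)
  · rintro ⟨Λ, hpos, hsum, h⟩
    have h0 := h 0
    have e11 : (P 0) 1 1 = (∑ i, Λ 0 i • M i) 1 1 := by rw [h0]
    have e00 : (P 0) 0 0 = (∑ i, Λ 0 i • M i) 0 0 := by rw [h0]
    simp only [P, M, Fin.sum_univ_two, Matrix.add_apply, Matrix.smul_apply] at e11 e00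
    norm_num at e11 e00
    have r11 : Λ 0 0 * (1/4 : ℝ) + Λ 0 1 * (3/4) = 0 := by
      have := congrArg Complex.re e11
      simpa [Complex.add_re, Complex.ofReal_re] using this.symm
    have r00 : Λ 0 0 * (3/4 : ℝ) + Λ 0 1 * (1/4) = 1 := by
      have := congrArg Complex.re e00
      simpa [Complex.add_re, Complex.ofReal_re] using this.symm
    have h00 := hpos 0 0
    have h01 := hpos 0 1
    nlinarith [r11, r00]
end
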